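/- Let G be a finite simple graph, K a field, I = I_G the edge ideal of G, and c = height(I). If I^{(k)} = I^k for all 1 ≤ k ≤ c, then G is bipartite. -/

import Mathlib

/-- The `n`-th symbolic power of an ideal `I`:
`I^{(n)} = ⋂_{𝔭 ∈ Min(I)} (I^n R_𝔭 ∩ R)`, the intersection over the minimal primes `𝔭`
of `I` of the preimages in `R` of `I^n R_𝔭` under the localization maps. -/
noncomputable def symbolicPower {R : Type*} [CommRing R] (I : Ideal R) (n : ℕ) : Ideal R :=
  ⨅ (P : Ideal R) (hP : P ∈ I.minimalPrimes),
    haveI : P.IsPrime := hP.1.1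
    (Ideal.map (algebraMap R (Localization.AtPrime P)) (I ^ n)).comap
      (algebraMap R (Localization.AtPrime P))

/-- The height of an ideal `I`: the minimum of the heights of the primes containing `I`,
where the height of a prime `𝔭` is the Krull dimension of `R_𝔭`. -/
noncomputable def idealHeight {R : Type*} [CommRing R] (I : Ideal R) : WithBot (WithTop ℕ) :=
  ⨅ (p : Ideal R) (hp : p.IsPrime) (_ : I ≤ p),
    haveI := hp
    ringKrullDim (Localization.AtPrime p)

/-- The edge ideal of a simple graph `G`: the ideal of `K[x_v : v ∈ V]` generated by the
monomials `x_u * x_v` over all edges `{u, v}` of `G`. -/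
noncomputable def edgeIdeal (K : Type*) [Field K] {V : Type*} (G : SimpleGraph V) :
    Ideal (MvPolynomial V K) :=
  Ideal.span {m | ∃ u v, G.Adj u v ∧ m = MvPolynomial.X u * MvPolynomial.X v}

/-- A graph is bipartite if its vertex set can be partitioned into two sets so that every
edge has one endpoint in each. -/
def IsBipartite {V : Type*} (G : SimpleGraph V) : Prop :=
  ∃ A : Set V, ∀ u v : V, G.Adj u v → (u ∈ A ↔ v ∉ A)

/-! If `G` is not bipartite it contains an odd cycle `C` of length `2s + 1`. The variables lying
in a prime `P ⊇ I_G` form a vertex cover, hence contain at least `s + 1` vertices of `C`; the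
primes spanned by variables then give `height I_G ≥ s + 1`. The product `m` of the variables of
`C` has degree `2s + 1 < 2(s + 1)`, so `m ∉ I_G^{s+1}`. But if `P` is a minimal prime, every vertex
of `C` in `P` has a neighbour outside `P`; multiplying `m` by the product `u ∉ P` of these
neighbours gives a product of at least `s + 1` edges, so `m ∈ I_G^{(s+1)}`. -/

open MvPolynomial Finset

namespace MvPolynomial

variable {σ R : Type*}

theorem X_mem_span_X_image_iff [CommSemiring R] [Nontrivial R] {A : Set σ} {i : σ} :
    (X i : MvPolynomial σ R) ∈ Ideal.span (X '' A) ↔ i ∈ A := by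
  classical
  simp [mem_ideal_span_X_image, support_X, Finsupp.single_apply]

theorem span_X_image_eq_ker [CommRing R] (A : Set σ) [DecidablePred (· ∈ A)] :
    Ideal.span (X '' A : Set (MvPolynomial σ R)) =
      RingHom.ker (aeval fun i => if i ∈ A then 0 else (X i : MvPolynomial σ R)) := by
  set φ : MvPolynomial σ R →ₐ[R] MvPolynomial σ R := aeval fun i => if i ∈ A then 0 else X i
  refine le_antisymm (Ideal.span_le.2 ?_) fun p hp => ?_
  · rintro _ ⟨i, hi, rfl⟩
    simp [φ, hi]
  · let π := Ideal.Quotient.mkₐ R (Ideal.span (X '' A : Set (MvPolynomial σ R)))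
    -- `φ` only kills variables that `π` kills already
    have hπφ : π.comp φ = π := by
      refine algHom_ext fun i => ?_
      by_cases hi : i ∈ A
      · have hXi : (X i : MvPolynomial σ R) ∈ Ideal.span (X '' A) := Ideal.subset_span ⟨i, hi, rfl⟩
        simp [φ, hi, π, Ideal.Quotient.eq_zero_iff_mem.2 hXi]
      · simp [φ, hi]
    have hπp := AlgHom.congr_fun hπφ p
    rw [AlgHom.comp_apply, RingHom.mem_ker.1 hp, map_zero] at hπp
    exact Ideal.Quotient.eq_zero_iff_mem.1 hπp.symm

theorem isPrime_span_X_image [CommRing R] [IsDomain R] (A : Set σ) :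
    (Ideal.span (X '' A : Set (MvPolynomial σ R))).IsPrime := by
  classical
  rw [span_X_image_eq_ker]
  exact RingHom.ker_isPrime _

theorem card_le_height_span_X_image [CommRing R] [IsDomain R] (W : Finset σ) :
    (#W : ℕ∞) ≤ (Ideal.span (X '' (W : Set σ) : Set (MvPolynomial σ R))).height := by
  classical
  induction W using Finset.induction_on with
  | empty => simp
  | insert a W ha ih =>
    rw [coe_insert]
    have := isPrime_span_X_image (R := R) (W : Set σ)
    have := isPrime_span_X_image (R := R) (insert a W : Set σ)
    have hlt : Ideal.span (X '' (W : Set σ) : Set (MvPolynomial σ R)) <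
        Ideal.span (X '' (insert a W : Set σ)) := by
      refine lt_of_le_of_ne (Ideal.span_mono (Set.image_mono (by simp))) fun h => ha ?_
      have : (X a : MvPolynomial σ R) ∈ Ideal.span (X '' (insert a W : Set σ)) :=
        Ideal.subset_span ⟨a, by simp, rfl⟩
      exact_mod_cast X_mem_span_X_image_iff.1 (h ▸ this)
    calc (#(insert a W) : ℕ∞) = #W + 1 := by simp [card_insert_of_notMem ha]
      _ ≤ (Ideal.span (X '' (W : Set σ) : Set (MvPolynomial σ R))).height + 1 := by gcongr
      _ ≤ _ := Ideal.height_add_one_le_of_lt_of_isPrime hlt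

end MvPolynomial

theorem mem_symbolicPower_iff {R : Type*} [CommRing R] {I : Ideal R} {n : ℕ} {x : R} :
    x ∈ symbolicPower I n ↔ ∀ P ∈ I.minimalPrimes, ∃ u ∉ P, u * x ∈ I ^ n := by
  simp only [symbolicPower, Ideal.mem_iInf, Ideal.mem_comap]
  refine forall₂_congr fun P hP => ?_
  have : P.IsPrime := hP.1.1
  rw [IsLocalization.algebraMap_mem_map_algebraMap_iff P.primeCompl]
  rfl

theorem le_idealHeight {R : Type*} [CommRing R] {I : Ideal R} {n : ℕ}
    (h : ∀ p : Ideal R, p.IsPrime → I ≤ p → n ≤ p.height) :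
    (n : WithBot (WithTop ℕ)) ≤ idealHeight I := by
  refine le_iInf₂ fun p hp => le_iInf fun hIp => ?_
  rw [IsLocalization.AtPrime.ringKrullDim_eq_height p]
  exact WithBot.coe_le_coe.2 (h p hp hIp)

theorem Fin.le_two_mul_card_of_forall_mem_or_add_one_mem {n : ℕ} [NeZero n] {Q : Finset (Fin n)}
    (h : ∀ i, i ∈ Q ∨ i + 1 ∈ Q) : n ≤ 2 * #Q := by
  classical
  have hQ : #Qᶜ ≤ #Q := card_le_card_of_injOn (· + 1)
    (fun i hi => (h i).resolve_left (by simpa using hi)) (add_left_injective 1).injOn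
  have := card_compl Q
  simp only [Fintype.card_fin] at this
  omega

section OddCycle

variable {V : Type*} {G : SimpleGraph V}

theorem isBipartite_of_colorable_two (h : G.Colorable 2) : IsBipartite G := by
  obtain ⟨C⟩ := h
  refine ⟨{v | C v = 0}, fun u v huv => ?_⟩
  have := C.valid huv
  show C u = 0 ↔ ¬C v = 0
  omega

theorem adj_mod_of_closed {f : ℕ → V} {n : ℕ} (hn : 0 < n) (hclosed : f n = f 0)
    (hadj : ∀ i < n, G.Adj (f i) (f (i + 1))) (j : ℕ) :
    G.Adj (f (j % n)) (f ((j + 1) % n)) := by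
  have hj := Nat.mod_lt j hn
  have hmod : (j + 1) % n = j % n + 1 ∨ j % n + 1 = n ∧ (j + 1) % n = 0 := by
    rcases Nat.lt_or_ge 1 n with h | h
    · rw [Nat.add_mod_eq_ite, Nat.mod_eq_of_lt h]
      split_ifs <;> omega
    · obtain rfl : n = 1 := by omega
      simp [Nat.mod_one]
  rcases hmod with h | ⟨h1, h2⟩
  · rw [h]
    exact hadj _ hj
  · have := hadj _ hj
    rwa [h1, hclosed, ← h2] at this

theorem exists_odd_closed_walk_of_not_colorable_two (h : ¬ G.Colorable 2) :
    ∃ n, Odd n ∧ ∃ f : ℕ → V, f n = f 0 ∧ ∀ i < n, G.Adj (f i) (f (i + 1)) := by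
  obtain ⟨u, w, hw⟩ : ∃ u, ∃ w : G.Walk u u, Odd w.length := by
    simpa [SimpleGraph.two_colorable_iff_forall_loop_even] using h
  exact ⟨w.length, hw, w.getVert, by simp, fun i hi => w.adj_getVert_succ hi⟩

/-- A shortest odd closed walk is a cycle: a repeated vertex would split it into two shorter
closed walks, one of which is odd. -/
theorem exists_odd_cycle_of_not_colorable_two (h : ¬ G.Colorable 2) :
    ∃ s, ∃ f : Fin (2 * s + 1) → V, Function.Injective f ∧ ∀ i, G.Adj (f i) (f (i + 1)) := by
  classical
  have hex := exists_odd_closed_walk_of_not_colorable_two h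
  obtain ⟨⟨s, hs⟩, f, hclosed, hadj⟩ := Nat.find_spec hex
  have hn : 0 < Nat.find hex := by omega
  have hne : ∀ a b, a < b → b < Nat.find hex → f a ≠ f b := by
    intro a b hab hbn hfab
    rcases Nat.even_or_odd (b - a) with ⟨t, ht⟩ | hodd
    · refine Nat.find_min hex (m := Nat.find hex - (b - a)) (by omega)
        ⟨⟨s - t, by omega⟩, fun i => f ((b + i) % Nat.find hex), ?_,
          fun i _ => adj_mod_of_closed hn hclosed hadj (b + i)⟩
      dsimp only
      rw [show b + (Nat.find hex - (b - a)) = a + Nat.find hex by omega, Nat.add_mod_right,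
        add_zero, Nat.mod_eq_of_lt hbn, Nat.mod_eq_of_lt (hab.trans hbn), hfab]
    · exact Nat.find_min hex (m := b - a) (by omega) ⟨hodd, fun i => f (a + i),
        by simpa [show a + (b - a) = b by omega] using hfab.symm,
        fun i hi => hadj (a + i) (by omega)⟩
  rw [hs] at hn hne hadj hclosed
  refine ⟨s, fun i => f i, fun i j hij => ?_, fun i => ?_⟩
  · by_contra hij'
    rcases Nat.lt_or_gt_of_ne (Fin.val_ne_of_ne hij') with hlt | hlt
    · exact hne _ _ hlt j.isLt hij
    · exact hne _ _ hlt i.isLt hij.symm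
  · simpa [Fin.val_add, Nat.mod_eq_of_lt i.isLt] using adj_mod_of_closed hn hclosed hadj i

end OddCycle

section EdgeIdeal

variable {K V : Type*} [Field K] {G : SimpleGraph V}

theorem X_mul_X_mem_edgeIdeal {u v : V} (h : G.Adj u v) :
    (X u * X v : MvPolynomial V K) ∈ edgeIdeal K G :=
  Ideal.subset_span ⟨u, v, h, rfl⟩

theorem edgeIdeal_le_span_X_image {A : Set V} (hA : ∀ u v, G.Adj u v → u ∈ A ∨ v ∈ A) :
    edgeIdeal K G ≤ Ideal.span (X '' A) := by
  rw [edgeIdeal, Ideal.span_le]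
  rintro _ ⟨u, v, huv, rfl⟩
  rcases hA u v huv with hu | hv
  · exact Ideal.mul_mem_right _ _ (Ideal.subset_span ⟨u, hu, rfl⟩)
  · exact Ideal.mul_mem_left _ _ (Ideal.subset_span ⟨v, hv, rfl⟩)

theorem X_mem_or_X_mem_of_edgeIdeal_le {P : Ideal (MvPolynomial V K)} [P.IsPrime]
    (hP : edgeIdeal K G ≤ P) {u v : V} (h : G.Adj u v) : X u ∈ P ∨ X v ∈ P :=
  Ideal.IsPrime.mem_or_mem ‹_› (hP (X_mul_X_mem_edgeIdeal h))

theorem exists_adj_X_notMem_of_mem_minimalPrimes {P : Ideal (MvPolynomial V K)}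
    (hP : P ∈ (edgeIdeal K G).minimalPrimes) {v : V} (hv : X v ∈ P) :
    ∃ w, G.Adj v w ∧ X w ∉ P := by
  have := hP.1.1
  by_contra! hnb
  set S := {u | (X u : MvPolynomial V K) ∈ P} \ {v}
  have hcover : ∀ a b, G.Adj a b → X a ∈ P → a ∈ S ∨ b ∈ S := by
    intro a b hab ha
    by_cases hav : a = v
    · subst hav
      exact Or.inr ⟨hnb b hab, hab.ne.symm⟩
    · exact Or.inl ⟨ha, hav⟩
  have hIS : edgeIdeal K G ≤ Ideal.span (X '' S) := edgeIdeal_le_span_X_image fun a b hab =>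
    (X_mem_or_X_mem_of_edgeIdeal_le hP.1.2 hab).elim (hcover a b hab)
      fun hb => (hcover b a hab.symm hb).symm
  have hSP : Ideal.span (X '' S) ≤ P := Ideal.span_le.2 <| by
    rintro _ ⟨u, hu, rfl⟩
    exact hu.1
  have hvS := hP.2 ⟨isPrime_span_X_image S, hIS⟩ hSP hv
  exact (X_mem_span_X_image_iff.1 hvS).2 rfl

theorem prod_X_notMem_edgeIdeal_pow {ι : Type*} (t : Finset ι) (f : ι → V) {k : ℕ}
    (hk : #t < 2 * k) : ∏ i ∈ t, (X (f i) : MvPolynomial V K) ∉ edgeIdeal K G ^ k := by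
  intro hm
  -- send every variable to the same variable of `K[X]` and compare degrees
  let φ : MvPolynomial V K →ₐ[K] Polynomial K := aeval fun _ => Polynomial.X
  have hI : (edgeIdeal K G).map φ ≤ Ideal.span {Polynomial.X ^ 2} := by
    rw [edgeIdeal, Ideal.map_span, Ideal.span_le]
    rintro _ ⟨_, ⟨u, v, -, rfl⟩, rfl⟩
    exact Ideal.mem_span_singleton.2 (by simp [φ, sq])
  have hφm : φ (∏ i ∈ t, X (f i)) ∈ Ideal.span {Polynomial.X ^ (2 * k)} := by
    rw [pow_mul, ← Ideal.span_singleton_pow]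
    exact Ideal.pow_right_mono hI k (Ideal.map_pow φ _ k ▸ Ideal.mem_map_of_mem φ hm)
  simp only [φ, map_prod, aeval_X, prod_const, Ideal.mem_span_singleton] at hφm
  have := (pow_dvd_pow_iff Polynomial.X_ne_zero Polynomial.not_isUnit_X).1 hφm
  omega

end EdgeIdeal

section OddCycleEdgeIdeal

variable {K V : Type*} [Field K] {G : SimpleGraph V} {s : ℕ} {f : Fin (2 * s + 1) → V}

theorem le_card_filter_X_mem_of_cycle (hadj : ∀ i, G.Adj (f i) (f (i + 1)))
    {P : Ideal (MvPolynomial V K)} [P.IsPrime] [DecidablePred fun i => X (f i) ∈ P]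
    (hP : edgeIdeal K G ≤ P) :
    s + 1 ≤ #{i | X (f i) ∈ P} := by
  have := Fin.le_two_mul_card_of_forall_mem_or_add_one_mem (Q := {i | X (f i) ∈ P}) fun i => by
    simpa using X_mem_or_X_mem_of_edgeIdeal_le hP (hadj i)
  omega

theorem le_idealHeight_edgeIdeal_of_cycle (hf : f.Injective)
    (hadj : ∀ i, G.Adj (f i) (f (i + 1))) :
    ((s + 1 : ℕ) : WithBot (WithTop ℕ)) ≤ idealHeight (edgeIdeal K G) := by
  classical
  refine le_idealHeight fun P _ hIP => ?_
  set W := image f {i | X (f i) ∈ P}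
  have hWP : Ideal.span (X '' (W : Set V)) ≤ P := Ideal.span_le.2 <| by
    rintro _ ⟨v, hv, rfl⟩
    obtain ⟨i, hi, rfl⟩ := mem_image.1 hv
    exact (mem_filter.1 hi).2
  calc (↑(s + 1) : ℕ∞) ≤ #W := by
        rw [card_image_of_injective _ hf]
        exact_mod_cast le_card_filter_X_mem_of_cycle hadj hIP
    _ ≤ (Ideal.span (X '' (W : Set V) : Set (MvPolynomial V K))).height :=
        card_le_height_span_X_image W
    _ ≤ P.height := Ideal.height_mono hWP

theorem prod_X_mem_symbolicPower_edgeIdeal_of_cycle (hadj : ∀ i, G.Adj (f i) (f (i + 1))) :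
    ∏ i, (X (f i) : MvPolynomial V K) ∈ symbolicPower (edgeIdeal K G) (s + 1) := by
  classical
  refine mem_symbolicPower_iff.2 fun P hP => ?_
  have := hP.1.1
  have hnb : ∀ v, ∃ w, X v ∈ P → G.Adj v w ∧ X w ∉ P := fun v => by
    by_cases hv : X v ∈ P
    · obtain ⟨w, hw⟩ := exists_adj_X_notMem_of_mem_minimalPrimes hP hv
      exact ⟨w, fun _ => hw⟩
    · exact ⟨v, fun h => absurd h hv⟩
  choose g hg using hnb
  set T : Finset (Fin (2 * s + 1)) := {i | X (f i) ∈ P}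
  refine ⟨∏ i ∈ T, X (g (f i)), fun hu => ?_, ?_⟩
  · obtain ⟨i, hi, hgi⟩ := Ideal.IsPrime.prod_mem_iff.1 hu
    exact (hg _ (mem_filter.1 hi).2).2 hgi
  · have hedges : ∏ i ∈ T, (X (f i) * X (g (f i))) ∈ edgeIdeal K G ^ (s + 1) := by
      refine Ideal.pow_le_pow_right (le_card_filter_X_mem_of_cycle hadj hP.1.2) ?_
      rw [← prod_const]
      exact Ideal.prod_mem_prod fun i hi => X_mul_X_mem_edgeIdeal (hg _ (mem_filter.1 hi).2).1
    rw [← prod_filter_mul_prod_filter_not univ (fun i => X (f i) ∈ P), ← mul_assoc,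
      ← prod_mul_distrib]
    exact Ideal.mul_mem_right _ _ (by simpa only [mul_comm] using hedges)

end OddCycleEdgeIdeal

theorem isBipartite_of_symbolicPower_eq_pow_general {K V : Type*} [Field K]
    (G : SimpleGraph V) (c : ℕ)
    (hc : idealHeight (edgeIdeal K G) = c)
    (h : ∀ k : ℕ, 1 ≤ k → k ≤ c → symbolicPower (edgeIdeal K G) k = edgeIdeal K G ^ k) :
    IsBipartite G := by
  by_contra hG
  obtain ⟨s, f, hf, hadj⟩ :=
    exists_odd_cycle_of_not_colorable_two (mt isBipartite_of_colorable_two hG)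
  have hsc : s + 1 ≤ c := by
    have := le_idealHeight_edgeIdeal_of_cycle (K := K) hf hadj
    rw [hc] at this
    exact_mod_cast this
  have hm := prod_X_mem_symbolicPower_edgeIdeal_of_cycle (K := K) hadj
  rw [h (s + 1) (by omega) hsc] at hm
  exact prod_X_notMem_edgeIdeal_pow _ _ (by rw [card_univ, Fintype.card_fin]; omega) hm

/-- Let `G` be a finite simple graph with edge ideal `I` of height `c`. If `I^{(k)} = I^k`
for all `1 ≤ k ≤ c`, then `G` is bipartite. -/
theorem isBipartite_of_symbolicPower_eq_pow {K V : Type*} [Field K] [Fintype V]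
    [DecidableEq V] (G : SimpleGraph V) (c : ℕ)
    (hc : idealHeight (edgeIdeal K G) = c)
    (h : ∀ k : ℕ, 1 ≤ k → k ≤ c → symbolicPower (edgeIdeal K G) k = edgeIdeal K G ^ k) :
    IsBipartite G :=
  isBipartite_of_symbolicPower_eq_pow_general G c hc h
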